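/- Fix a queue i ∈ [n] and fixed strategies p_{−i} ∈ (Δ^{m−1})^{n−1} of the other queues. Then the set of global minimizers of the function x ↦ r_i(x, p_{−i}) over x ∈ Δ^{m−1} is a nonempty, closed, convex subset of Δ^{m−1}. -/

import Mathlib

open Finset

/-- Membership of a vector in the probability simplex `Δ^{m-1}`. -/
def inSimplex {m : ℕ} (q : Fin m → ℝ) : Prop :=
  (∀ j, 0 ≤ q j) ∧ ∑ j, q j = 1

/-- `α(S | p, μ, S')`: expected number of packets cleared by the queues in `S` in one round,
when the queues in `S'` have priority over `S` and `S` has priority over all other queues. -/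
noncomputable def alphaQ {n m : ℕ} (p : Fin n → Fin m → ℝ) (μ : Fin m → ℝ)
    (S S' : Finset (Fin n)) : ℝ :=
  ∑ j : Fin m, μ j * (∏ i ∈ S', (1 - p i j)) * (1 - ∏ i ∈ S, (1 - p i j))

/-- `λ(S)`: total arrival rate of the queues in `S`. -/
def lamQ {n : ℕ} (lam : Fin n → ℝ) (S : Finset (Fin n)) : ℝ :=
  ∑ i ∈ S, lam i

/-- `f(S | p, μ, λ, S') = α(S | p, μ, S') / λ(S)`. -/
noncomputable def fQ {n m : ℕ} (p : Fin n → Fin m → ℝ) (μ : Fin m → ℝ) (lam : Fin n → ℝ)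
    (S S' : Finset (Fin n)) : ℝ :=
  alphaQ p μ S S' / lamQ lam S

open scoped Classical in
/-- The union of all nonempty subsets `S ⊆ I` minimizing `f(· | p, μ, λ, S')` over the
nonempty subsets of `I` (the "largest-cardinality minimizer"). -/
noncomputable def unionMin {n m : ℕ} (p : Fin n → Fin m → ℝ) (μ : Fin m → ℝ) (lam : Fin n → ℝ)
    (I S' : Finset (Fin n)) : Finset (Fin n) :=
  I.powerset.sup fun S =>
    if S.Nonempty ∧ ∀ T ∈ I.powerset, T.Nonempty → fQ p μ lam S S' ≤ fQ p μ lam T S' then S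
    else ∅

/-- The group selected by one step of the rate algorithm on remaining queues `I`
with current (already discounted) service rates `μ`. -/
noncomputable def topSet {n m : ℕ} (p : Fin n → Fin m → ℝ) (μ : Fin m → ℝ) (lam : Fin n → ℝ)
    (I : Finset (Fin n)) : Finset (Fin n) :=
  unionMin p μ lam I ∅

open scoped Classical in
/-- Fuelled version of the recursive rate algorithm: `I` is the set of remaining queues
and `μc` the current (discounted) service rates. -/
noncomputable def rateAux {n m : ℕ} (lam : Fin n → ℝ) (p : Fin n → Fin m → ℝ) :
    ℕ → Finset (Fin n) → (Fin m → ℝ) → Fin n → ℝ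
  | 0, _, _, _ => 0
  | fuel + 1, I, μc, i =>
    if ∀ S ∈ I.powerset, S.Nonempty → 1 ≤ fQ p μc lam S ∅ then 0
    else if i ∈ topSet p μc lam I then 1 - fQ p μc lam (topSet p μc lam I) ∅
    else
      rateAux lam p fuel (I \ topSet p μc lam I)
        (fun j => μc j * ∏ r ∈ topSet p μc lam I, (1 - p r j)) i

/-- The rate function `r : (Δ^{m-1})^n → [0,1]^n` computed by the recursive algorithm:
`rateQ lam μ p i` is the long-run aging rate `r_i(p)` of queue `i`. -/
noncomputable def rateQ {n m : ℕ} (lam : Fin n → ℝ) (μ : Fin m → ℝ)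
    (p : Fin n → Fin m → ℝ) (i : Fin n) : ℝ :=
  rateAux lam p (n + 1) Finset.univ μ i

/-- State (remaining queues, discounted service rates) of the rate algorithm after `k` steps. -/
noncomputable def stateQ {n m : ℕ} (lam : Fin n → ℝ) (μ : Fin m → ℝ)
    (p : Fin n → Fin m → ℝ) : ℕ → Finset (Fin n) × (Fin m → ℝ)
  | 0 => (Finset.univ, μ)
  | k + 1 =>
    ((stateQ lam μ p k).1 \ topSet p (stateQ lam μ p k).2 lam (stateQ lam μ p k).1,
      fun j => (stateQ lam μ p k).2 j *
        ∏ r ∈ topSet p (stateQ lam μ p k).2 lam (stateQ lam μ p k).1, (1 - p r j))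

/-- `g_{k+1} = max {0, 1 - f_{k+1}}`: the aging rate of the `(k+1)`st group output by
the rate algorithm (`k = 0` corresponds to `S_1`). -/
noncomputable def gQ {n m : ℕ} (lam : Fin n → ℝ) (μ : Fin m → ℝ)
    (p : Fin n → Fin m → ℝ) (k : ℕ) : ℝ :=
  max 0 (1 - fQ p (stateQ lam μ p k).2 lam
    (topSet p (stateQ lam μ p k).2 lam (stateQ lam μ p k).1) ∅)

/-- `f* = min_{∅ ≠ S ⊆ [n]} f(S | p)`. -/
noncomputable def fstarQ {n m : ℕ} (p : Fin n → Fin m → ℝ) (μ : Fin m → ℝ)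
    (lam : Fin n → ℝ) : ℝ :=
  sInf ((fun S => fQ p μ lam S ∅) '' {S : Finset (Fin n) | S.Nonempty})

/-- A nonempty subset is tight if it minimizes `f(· | p)` over all nonempty subsets of `[n]`. -/
def IsTight {n m : ℕ} (p : Fin n → Fin m → ℝ) (μ : Fin m → ℝ) (lam : Fin n → ℝ)
    (S : Finset (Fin n)) : Prop :=
  S.Nonempty ∧ ∀ T : Finset (Fin n), T.Nonempty → fQ p μ lam S ∅ ≤ fQ p μ lam T ∅

/-- `T` is a level subset at the next level, given that `W` is the union of all level
subsets at the previous levels: `T` is an inclusion-minimal nonempty subset of `K \ W`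
with `f(T | W) = f*`, where `K` is the union of all tight subsets. -/
def IsLevelSet {n m : ℕ} (p : Fin n → Fin m → ℝ) (μ : Fin m → ℝ) (lam : Fin n → ℝ)
    (W T : Finset (Fin n)) : Prop :=
  T.Nonempty ∧ T ⊆ unionMin p μ lam Finset.univ ∅ \ W ∧
    fQ p μ lam T W = fstarQ p μ lam ∧
    ∀ T' : Finset (Fin n), T'.Nonempty → T' ⊆ T →
      fQ p μ lam T' W = fstarQ p μ lam → T' = T

open scoped Classical in
/-- `levelUnion p μ lam ℓ` is the union of all level subsets at levels `≤ ℓ`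
in the level partition of the union `K` of all tight subsets. -/
noncomputable def levelUnion {n m : ℕ} (p : Fin n → Fin m → ℝ) (μ : Fin m → ℝ)
    (lam : Fin n → ℝ) : ℕ → Finset (Fin n)
  | 0 => ∅
  | ℓ + 1 =>
    levelUnion p μ lam ℓ ∪
      Finset.univ.powerset.sup fun T =>
        if IsLevelSet p μ lam (levelUnion p μ lam ℓ) T then T else ∅


/-!
When the rate algorithm serves queue `i` at a positive rate, the groups it peels off before
and up to the group `S ∋ i` form a certificate: each group has density `f(· | earlier groups)`
at most that of its subsets and at most `Θ = f(S | earlier groups) < 1`, and no `i`-free subset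
of `S` has density below `Θ`; then `r_i = 1 - Θ`. Conversely, by submodularity of `α`, any such
certificate forces `r_i ≥ 1 - Θ`. When only queue `i` changes its strategy `x`, densities of
`i`-free sets do not move and `Θ` is affine in `x`. Comparing the certificate at a convex
combination with the endpoint where `Θ` is smaller shows that `x ↦ r_i(x, p_{-i})` is
quasiconvex. Moving the `i`-free subsets of density exactly `Θ` into the chain makes the
certificate survive small perturbations of `x`, so `x ↦ r_i(x, p_{-i})` is lower
semicontinuous. On the compact convex simplex, the minimizers of such a function form a
nonempty closed convex set.
-/

section Densities

variable {n m : ℕ} {p : Fin n → Fin m → ℝ} {μ : Fin m → ℝ} {lam : Fin n → ℝ}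

def ProbEntries (p : Fin n → Fin m → ℝ) : Prop :=
  ∀ r j, 0 ≤ p r j ∧ p r j ≤ 1

lemma probEntries_update {i : Fin n} {x : Fin m → ℝ} (hp : ∀ r, inSimplex (p r))
    (hx : inSimplex x) : ProbEntries (Function.update p i x) := by
  intro r j
  have hIcc : ∀ q : Fin m → ℝ, inSimplex q → 0 ≤ q j ∧ q j ≤ 1 := fun q hq =>
    mem_Icc_of_mem_stdSimplex hq j
  rcases eq_or_ne r i with rfl | hr
  · simpa using hIcc x hx
  · simpa [Function.update_of_ne hr] using hIcc _ (hp r)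

lemma prod_one_sub_nonneg (hp : ProbEntries p) (S : Finset (Fin n)) (j : Fin m) :
    0 ≤ ∏ r ∈ S, (1 - p r j) :=
  prod_nonneg fun r _ => sub_nonneg.2 (hp r j).2

lemma prod_one_sub_le_one (hp : ProbEntries p) (S : Finset (Fin n)) (j : Fin m) :
    ∏ r ∈ S, (1 - p r j) ≤ 1 :=
  prod_le_one (fun r _ => sub_nonneg.2 (hp r j).2) fun r _ => sub_le_self _ (hp r j).1

lemma prod_one_sub_anti (hp : ProbEntries p) {W W' : Finset (Fin n)} (h : W ⊆ W')
    (j : Fin m) : ∏ r ∈ W', (1 - p r j) ≤ ∏ r ∈ W, (1 - p r j) := by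
  rw [← prod_sdiff h]
  exact mul_le_of_le_one_left (prod_one_sub_nonneg hp W j) (prod_one_sub_le_one hp _ j)

/-- The service rates left over once the queues in `U` have been served. -/
def discount (p : Fin n → Fin m → ℝ) (μ : Fin m → ℝ) (U : Finset (Fin n)) : Fin m → ℝ :=
  fun j => μ j * ∏ r ∈ U, (1 - p r j)

@[simp]
lemma discount_empty : discount p μ ∅ = μ := by
  funext j
  simp [discount]

lemma discount_discount {U T : Finset (Fin n)} (h : Disjoint U T) :
    discount p (discount p μ U) T = discount p μ (U ∪ T) := by
  funext j
  simp only [discount]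
  rw [prod_union h, mul_assoc]

lemma discount_nonneg (hp : ProbEntries p) (hμ : ∀ j, 0 ≤ μ j) (U : Finset (Fin n))
    (j : Fin m) : 0 ≤ discount p μ U j :=
  mul_nonneg (hμ j) (prod_one_sub_nonneg hp U j)

@[simp]
lemma alphaQ_empty_left (W : Finset (Fin n)) : alphaQ p μ ∅ W = 0 := by
  simp [alphaQ]

lemma alphaQ_discount (U S : Finset (Fin n)) :
    alphaQ p (discount p μ U) S ∅ = alphaQ p μ S U := by
  simp [alphaQ, discount]

lemma alphaQ_nonneg (hp : ProbEntries p) (hμ : ∀ j, 0 ≤ μ j) (S W : Finset (Fin n)) :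
    0 ≤ alphaQ p μ S W :=
  sum_nonneg fun j _ => mul_nonneg (mul_nonneg (hμ j) (prod_one_sub_nonneg hp W j))
    (sub_nonneg.2 (prod_one_sub_le_one hp S j))

lemma alphaQ_union {S T W : Finset (Fin n)} (hST : Disjoint S T) (hWS : Disjoint W S) :
    alphaQ p μ (S ∪ T) W = alphaQ p μ S W + alphaQ p μ T (W ∪ S) := by
  simp only [alphaQ, ← sum_add_distrib, prod_union hST, prod_union hWS]
  exact sum_congr rfl fun j _ => by ring

lemma alphaQ_anti_right (hp : ProbEntries p) (hμ : ∀ j, 0 ≤ μ j) (S : Finset (Fin n))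
    {W W' : Finset (Fin n)} (h : W ⊆ W') : alphaQ p μ S W' ≤ alphaQ p μ S W :=
  sum_le_sum fun j _ => mul_le_mul_of_nonneg_right
    (mul_le_mul_of_nonneg_left (prod_one_sub_anti hp h j) (hμ j))
    (sub_nonneg.2 (prod_one_sub_le_one hp S j))

lemma alphaQ_union_add_inter_le (hp : ProbEntries p) (hμ : ∀ j, 0 ≤ μ j)
    (S T W : Finset (Fin n)) :
    alphaQ p μ (S ∪ T) W + alphaQ p μ (S ∩ T) W ≤ alphaQ p μ S W + alphaQ p μ T W := by
  simp only [alphaQ, ← sum_add_distrib]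
  refine sum_le_sum fun j _ => ?_
  have hS : ∏ r ∈ S, (1 - p r j) = (∏ r ∈ S ∩ T, (1 - p r j)) * ∏ r ∈ S \ T, (1 - p r j) :=
    (prod_inter_mul_prod_sdiff S T _).symm
  have hT : ∏ r ∈ T, (1 - p r j) = (∏ r ∈ S ∩ T, (1 - p r j)) * ∏ r ∈ T \ S, (1 - p r j) := by
    rw [inter_comm, prod_inter_mul_prod_sdiff]
  have hST : ∏ r ∈ S ∪ T, (1 - p r j) = (∏ r ∈ S, (1 - p r j)) * ∏ r ∈ T \ S, (1 - p r j) := by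
    rw [← prod_union disjoint_sdiff, union_sdiff_self_eq_union]
  rw [hST, hS, hT]
  have hu := prod_one_sub_nonneg hp (S ∩ T) j
  have hs := prod_one_sub_le_one hp (S \ T) j
  have ht := prod_one_sub_le_one hp (T \ S) j
  have hμW := mul_nonneg (hμ j) (prod_one_sub_nonneg hp W j)
  -- RHS - LHS = μ_j ∏_W (1-p) · ∏_{S∩T} (1-p) · (1 - ∏_{S\T} (1-p)) · (1 - ∏_{T\S} (1-p))
  nlinarith [mul_nonneg hμW (mul_nonneg hu (mul_nonneg (sub_nonneg.2 hs) (sub_nonneg.2 ht)))]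

@[simp]
lemma lamQ_empty : lamQ lam ∅ = 0 := by
  simp [lamQ]

lemma lamQ_nonneg (hlam : ∀ r, 0 < lam r) (S : Finset (Fin n)) : 0 ≤ lamQ lam S :=
  sum_nonneg fun r _ => (hlam r).le

lemma lamQ_pos (hlam : ∀ r, 0 < lam r) {S : Finset (Fin n)} (hS : S.Nonempty) :
    0 < lamQ lam S :=
  sum_pos (fun r _ => hlam r) hS

lemma lamQ_union {S T : Finset (Fin n)} (h : Disjoint S T) :
    lamQ lam (S ∪ T) = lamQ lam S + lamQ lam T :=
  sum_union h

lemma lamQ_union_add_inter (S T : Finset (Fin n)) :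
    lamQ lam (S ∪ T) + lamQ lam (S ∩ T) = lamQ lam S + lamQ lam T :=
  sum_union_inter

lemma fQ_discount (U S : Finset (Fin n)) :
    fQ p (discount p μ U) lam S ∅ = fQ p μ lam S U := by
  rw [fQ, fQ, alphaQ_discount]

lemma fQ_nonneg (hp : ProbEntries p) (hμ : ∀ j, 0 ≤ μ j) (hlam : ∀ r, 0 < lam r)
    (S W : Finset (Fin n)) : 0 ≤ fQ p μ lam S W :=
  div_nonneg (alphaQ_nonneg hp hμ S W) (lamQ_nonneg hlam S)

lemma alphaQ_eq_fQ_mul (hlam : ∀ r, 0 < lam r) (S W : Finset (Fin n)) :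
    alphaQ p μ S W = fQ p μ lam S W * lamQ lam S := by
  rcases S.eq_empty_or_nonempty with rfl | hS
  · simp
  · exact (div_mul_cancel₀ _ (lamQ_pos hlam hS).ne').symm

lemma fQ_le_iff (hlam : ∀ r, 0 < lam r) {S W : Finset (Fin n)} (hS : S.Nonempty) {c : ℝ} :
    fQ p μ lam S W ≤ c ↔ alphaQ p μ S W ≤ c * lamQ lam S :=
  div_le_iff₀ (lamQ_pos hlam hS)

lemma fQ_le_of_alphaQ_le (hlam : ∀ r, 0 < lam r) {S W : Finset (Fin n)} {c : ℝ} (hc : 0 ≤ c)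
    (h : alphaQ p μ S W ≤ c * lamQ lam S) : fQ p μ lam S W ≤ c := by
  rcases S.eq_empty_or_nonempty with rfl | hS
  · simpa [fQ] using hc
  · exact (fQ_le_iff hlam hS).2 h

lemma lt_fQ_iff (hlam : ∀ r, 0 < lam r) {S W : Finset (Fin n)} (hS : S.Nonempty) {c : ℝ} :
    c < fQ p μ lam S W ↔ c * lamQ lam S < alphaQ p μ S W :=
  lt_div_iff₀ (lamQ_pos hlam hS)

lemma mul_lamQ_le_alphaQ (hlam : ∀ r, 0 < lam r) {S W : Finset (Fin n)} {c : ℝ}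
    (h : S.Nonempty → c ≤ fQ p μ lam S W) : c * lamQ lam S ≤ alphaQ p μ S W := by
  rcases S.eq_empty_or_nonempty with rfl | hS
  · simp
  · exact (le_div_iff₀ (lamQ_pos hlam hS)).1 (h hS)

lemma alphaQ_union_le (hp : ProbEntries p) (hμ : ∀ j, 0 ≤ μ j) {S T W : Finset (Fin n)}
    {c : ℝ} (hS : alphaQ p μ S W ≤ c * lamQ lam S) (hT : alphaQ p μ T W ≤ c * lamQ lam T)
    (hST : c * lamQ lam (S ∩ T) ≤ alphaQ p μ (S ∩ T) W) :
    alphaQ p μ (S ∪ T) W ≤ c * lamQ lam (S ∪ T) := by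
  have hsub := alphaQ_union_add_inter_le hp hμ S T W
  have hl := congrArg (c * ·) (lamQ_union_add_inter (lam := lam) S T)
  simp only [mul_add] at hl
  linarith

lemma alphaQ_sdiff_le (hp : ProbEntries p) (hμ : ∀ j, 0 ≤ μ j) {T U Z : Finset (Fin n)}
    {c : ℝ} (hUT : Disjoint U T) (hUZ : U ⊆ Z) (hT : alphaQ p μ T U ≤ c * lamQ lam T)
    (hTZ : c * lamQ lam (T ∩ Z) ≤ alphaQ p μ (T ∩ Z) U) :
    alphaQ p μ (T \ Z) Z ≤ c * lamQ lam (T \ Z) := by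
  have hsplit : T ∩ Z ∪ T \ Z = T := by rw [union_comm, sdiff_union_inter]
  have hdisj : Disjoint (T ∩ Z) (T \ Z) := disjoint_sdiff.mono_left inter_subset_right
  have hα := alphaQ_union (p := p) (μ := μ) hdisj (hUT.mono_right inter_subset_left)
  have hl := lamQ_union (lam := lam) hdisj
  rw [hsplit] at hα hl
  have hanti := alphaQ_anti_right hp hμ (T \ Z) (union_subset hUZ (inter_subset_right (s₁ := T)))
  rw [hl, mul_add] at hT
  linarith

end Densities

section UnionClosed

variable {α : Type*} [DecidableEq α] {I : Finset α} {P : Finset α → Prop} [DecidablePred P]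

lemma sup_ite_subset : (I.powerset.sup fun S => if P S then S else ∅) ⊆ I :=
  Finset.sup_le fun S hS => by
    split_ifs
    exacts [mem_powerset.1 hS, empty_subset I]

lemma subset_sup_ite {S : Finset α} (hSI : S ⊆ I) (hS : P S) :
    S ⊆ I.powerset.sup fun S => if P S then S else ∅ := by
  simpa [hS] using le_sup (f := fun S => if P S then S else ∅) (mem_powerset.2 hSI)

lemma sup_ite_mem (hP : ∀ S ⊆ I, ∀ T ⊆ I, P S → P T → P (S ∪ T)) {S₀ : Finset α}
    (hS₀I : S₀ ⊆ I) (hS₀ : P S₀) : P (I.powerset.sup fun S => if P S then S else ∅) := by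
  have hsup : (I.powerset.sup fun S => if P S then S else ∅) = ∅ ∨
      P (I.powerset.sup fun S => if P S then S else ∅) := by
    refine sup_induction (p := fun s => s ⊆ I ∧ (s = ∅ ∨ P s)) ⟨empty_subset I, Or.inl rfl⟩
      (fun a ⟨haI, ha⟩ b ⟨hbI, hb⟩ => ⟨union_subset haI hbI, ?_⟩) (fun S hS => ?_) |>.2
    · rcases ha with rfl | ha
      · simpa using hb
      rcases hb with rfl | hb
      · simpa using Or.inr ha
      exact Or.inr (hP a haI b hbI ha hb)
    · split_ifs with h
      exacts [⟨mem_powerset.1 hS, Or.inr h⟩, ⟨empty_subset I, Or.inl rfl⟩]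
  rcases hsup with h | h
  · rw [h, ← subset_empty.1 (h ▸ subset_sup_ite hS₀I hS₀)]
    exact hS₀
  · exact h

end UnionClosed

section TopSet

variable {n m : ℕ} {p : Fin n → Fin m → ℝ} {μ : Fin m → ℝ} {lam : Fin n → ℝ}

lemma topSet_subset (I : Finset (Fin n)) : topSet p μ lam I ⊆ I :=
  sup_ite_subset

lemma topSet_isMin (hp : ProbEntries p) (hμ : ∀ j, 0 ≤ μ j) (hlam : ∀ r, 0 < lam r)
    {I : Finset (Fin n)} (hI : I.Nonempty) :
    (topSet p μ lam I).Nonempty ∧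
      ∀ R ⊆ I, R.Nonempty → fQ p μ lam (topSet p μ lam I) ∅ ≤ fQ p μ lam R ∅ := by
  classical
  obtain ⟨S₀, hS₀, hS₀min⟩ := exists_min_image (I.powerset.filter Finset.Nonempty)
    (fun S => fQ p μ lam S ∅) ⟨I, by simp [hI]⟩
  simp only [mem_filter, mem_powerset] at hS₀ hS₀min
  have hmin : (topSet p μ lam I).Nonempty ∧ ∀ R ∈ I.powerset, R.Nonempty →
      fQ p μ lam (topSet p μ lam I) ∅ ≤ fQ p μ lam R ∅ := by
    refine sup_ite_mem (P := fun S => S.Nonempty ∧ ∀ R ∈ I.powerset, R.Nonempty →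
        fQ p μ lam S ∅ ≤ fQ p μ lam R ∅)
      (fun S hSI T hTI hS hT => ⟨hS.1.mono subset_union_left, ?_⟩) hS₀.1
      ⟨hS₀.2, fun R hR hRne => hS₀min R ⟨mem_powerset.1 hR, hRne⟩⟩
    -- two minimizers share the minimal density, and their union still attains it
    have hST : fQ p μ lam T ∅ = fQ p μ lam S ∅ :=
      le_antisymm (hT.2 S (mem_powerset.2 hSI) hS.1) (hS.2 T (mem_powerset.2 hTI) hT.1)
    intro R hR hRne
    refine ((fQ_le_iff hlam (hS.1.mono subset_union_left)).2 ?_).trans (hS.2 R hR hRne)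
    refine alphaQ_union_le hp hμ (alphaQ_eq_fQ_mul hlam S ∅).le
      (hST ▸ (alphaQ_eq_fQ_mul hlam T ∅).le) (mul_lamQ_le_alphaQ hlam fun hne => ?_)
    exact hS.2 _ (mem_powerset.2 (inter_subset_left.trans hSI)) hne
  exact ⟨hmin.1, fun R hR => hmin.2 R (mem_powerset.2 hR)⟩

end TopSet

section Algorithm

variable {n m : ℕ} {p : Fin n → Fin m → ℝ} {μ : Fin m → ℝ} {lam : Fin n → ℝ} {i : Fin n}

/-- The group the rate algorithm selects once the queues in `U` have been served. -/
noncomputable def nextGroup (p : Fin n → Fin m → ℝ) (μ : Fin m → ℝ) (lam : Fin n → ℝ)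
    (U : Finset (Fin n)) : Finset (Fin n) :=
  topSet p (discount p μ U) lam Uᶜ

lemma nextGroup_subset (U : Finset (Fin n)) : nextGroup p μ lam U ⊆ Uᶜ :=
  topSet_subset _

lemma disjoint_nextGroup (U : Finset (Fin n)) : Disjoint U (nextGroup p μ lam U) :=
  disjoint_of_subset_right (nextGroup_subset U) disjoint_compl_right

lemma nextGroup_isMin (hp : ProbEntries p) (hμ : ∀ j, 0 ≤ μ j) (hlam : ∀ r, 0 < lam r)
    {U : Finset (Fin n)} (hU : Uᶜ.Nonempty) :
    (nextGroup p μ lam U).Nonempty ∧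
      ∀ R ⊆ Uᶜ, R.Nonempty → fQ p μ lam (nextGroup p μ lam U) U ≤ fQ p μ lam R U := by
  obtain ⟨hne, hmin⟩ := topSet_isMin hp (discount_nonneg hp hμ U) hlam hU
  refine ⟨hne, fun R hR hRne => ?_⟩
  simpa only [nextGroup, fQ_discount] using hmin R hR hRne

lemma mul_lamQ_le_alphaQ_of_isMin (hlam : ∀ r, 0 < lam r) {T U V R : Finset (Fin n)}
    (hTV : T ⊆ V) (hUT : Disjoint U T)
    (hmin : ∀ R' ⊆ V, R'.Nonempty → fQ p μ lam T U ≤ fQ p μ lam R' U) (hR : R ⊆ V \ T) :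
    fQ p μ lam T U * lamQ lam R ≤ alphaQ p μ R (U ∪ T) := by
  have hTR : Disjoint T R := disjoint_of_subset_right hR disjoint_sdiff
  have hα := alphaQ_union (p := p) (μ := μ) hTR hUT
  have hl := lamQ_union (lam := lam) hTR
  have hle := mul_lamQ_le_alphaQ hlam (S := T ∪ R) (W := U) (c := fQ p μ lam T U)
    fun hne => hmin _ (union_subset hTV (hR.trans sdiff_subset)) hne
  rw [hα, hl, mul_add, ← alphaQ_eq_fQ_mul hlam] at hle
  linarith

lemma le_fQ_union_nextGroup (hp : ProbEntries p) (hμ : ∀ j, 0 ≤ μ j) (hlam : ∀ r, 0 < lam r)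
    {U : Finset (Fin n)} (hU : Uᶜ.Nonempty) {R : Finset (Fin n)}
    (hR : R ⊆ (U ∪ nextGroup p μ lam U)ᶜ) (hRne : R.Nonempty) :
    fQ p μ lam (nextGroup p μ lam U) U ≤ fQ p μ lam R (U ∪ nextGroup p μ lam U) := by
  rw [compl_union, ← sdiff_eq_inter_compl] at hR
  exact (le_div_iff₀ (lamQ_pos hlam hRne)).2 (mul_lamQ_le_alphaQ_of_isMin hlam
    (nextGroup_subset U) (disjoint_nextGroup U) (nextGroup_isMin hp hμ hlam hU).2 hR)

lemma card_compl_union_lt {U T : Finset (Fin n)} (hT : T ⊆ Uᶜ) (hTne : T.Nonempty) :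
    (U ∪ T)ᶜ.card < Uᶜ.card := by
  obtain ⟨t, ht⟩ := hTne
  refine card_lt_card ⟨compl_subset_compl.2 subset_union_left, fun h => ?_⟩
  simpa [ht] using h (hT ht)

lemma rateAux_compl_succ (fuel : ℕ) (U : Finset (Fin n)) :
    rateAux lam p (fuel + 1) Uᶜ (discount p μ U) i =
      if ∀ R ⊆ Uᶜ, R.Nonempty → 1 ≤ fQ p μ lam R U then 0
      else if i ∈ nextGroup p μ lam U then 1 - fQ p μ lam (nextGroup p μ lam U) U
      else rateAux lam p fuel (U ∪ nextGroup p μ lam U)ᶜ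
        (discount p μ (U ∪ nextGroup p μ lam U)) i := by
  have hcompl : Uᶜ \ nextGroup p μ lam U = (U ∪ nextGroup p μ lam U)ᶜ := by
    rw [compl_union, sdiff_eq_inter_compl]
  rw [← discount_discount (disjoint_nextGroup U), ← hcompl]
  simp only [rateAux, mem_powerset, fQ_discount]
  rfl

lemma rateQ_eq_rateAux (p : Fin n → Fin m → ℝ) :
    rateQ lam μ p i = rateAux lam p (n + 1) (∅ : Finset (Fin n))ᶜ (discount p μ ∅) i := by
  rw [compl_empty, discount_empty]
  rfl

lemma card_compl_empty_lt : (∅ : Finset (Fin n))ᶜ.card < n + 1 := by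
  simp

lemma exists_dense_of_rateAux_lt (hp : ProbEntries p) (hμ : ∀ j, 0 ≤ μ j)
    (hlam : ∀ r, 0 < lam r) {Θ : ℝ} (hΘ : Θ < 1) :
    ∀ (fuel : ℕ) (U : Finset (Fin n)), Uᶜ.card < fuel → i ∉ U →
      rateAux lam p fuel Uᶜ (discount p μ U) i < 1 - Θ →
      ∃ Z : Finset (Fin n), i ∉ Z ∧ ∀ R ⊆ Zᶜ, R.Nonempty → Θ < fQ p μ lam R Z
  | 0, _, hcard, _, _ => absurd hcard (Nat.not_lt_zero _)
  | fuel + 1, U, hcard, hiU, hval => by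
    rw [rateAux_compl_succ] at hval
    split_ifs at hval with hall hiT
    · exact ⟨U, hiU, fun R hR hRne => hΘ.trans_le (hall R hR hRne)⟩
    · obtain ⟨-, hmin⟩ := nextGroup_isMin hp hμ hlam ⟨i, mem_compl.2 hiU⟩
      exact ⟨U, hiU, fun R hR hRne => by linarith [hmin R hR hRne]⟩
    · obtain ⟨hTne, -⟩ := nextGroup_isMin hp hμ hlam ⟨i, mem_compl.2 hiU⟩
      refine exists_dense_of_rateAux_lt hp hμ hlam hΘ fuel _ ?_ ?_ hval
      · exact (card_compl_union_lt (nextGroup_subset U) hTne).trans_le (Nat.lt_succ_iff.1 hcard)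
      · simp [hiU, hiT]

end Algorithm

section Chains

variable {n m : ℕ} {p : Fin n → Fin m → ℝ} {μ : Fin m → ℝ} {lam : Fin n → ℝ} {i : Fin n}

def chainUnion : List (Finset (Fin n)) → Finset (Fin n)
  | [] => ∅
  | T :: L => T ∪ chainUnion L

@[simp]
lemma chainUnion_nil : chainUnion ([] : List (Finset (Fin n))) = ∅ := rfl

@[simp]
lemma chainUnion_cons (T : Finset (Fin n)) (L : List (Finset (Fin n))) :
    chainUnion (T :: L) = T ∪ chainUnion L := rfl

@[simp]
lemma chainUnion_concat (L : List (Finset (Fin n))) (T : Finset (Fin n)) :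
    chainUnion (L ++ [T]) = chainUnion L ∪ T := by
  induction L with
  | nil => simp
  | cons S L ih => simp [ih, union_assoc]

/-- The groups of `L` are served in turn after the queues in `U`. -/
def MinChain (p : Fin n → Fin m → ℝ) (μ : Fin m → ℝ) (lam : Fin n → ℝ) :
    Finset (Fin n) → List (Finset (Fin n)) → ℝ → Prop
  | _, [], _ => True
  | U, T :: L, c => T ⊆ Uᶜ ∧ (∀ R ⊆ T, R.Nonempty → fQ p μ lam T U ≤ fQ p μ lam R U) ∧
      fQ p μ lam T U ≤ c ∧ MinChain p μ lam (U ∪ T) L c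

lemma MinChain.mono {U : Finset (Fin n)} {L : List (Finset (Fin n))} {c c' : ℝ}
    (h : MinChain p μ lam U L c) (hc : c ≤ c') : MinChain p μ lam U L c' := by
  induction L generalizing U with
  | nil => trivial
  | cons T L ih => exact ⟨h.1, h.2.1, h.2.2.1.trans hc, ih h.2.2.2⟩

lemma MinChain.concat {U T : Finset (Fin n)} {L : List (Finset (Fin n))} {c : ℝ}
    (h : MinChain p μ lam U L c) (hT : T ⊆ (U ∪ chainUnion L)ᶜ)
    (hmin : ∀ R ⊆ T, R.Nonempty →
      fQ p μ lam T (U ∪ chainUnion L) ≤ fQ p μ lam R (U ∪ chainUnion L))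
    (hc : fQ p μ lam T (U ∪ chainUnion L) ≤ c) : MinChain p μ lam U (L ++ [T]) c := by
  induction L generalizing U with
  | nil => exact ⟨by simpa using hT, by simpa using hmin, by simpa using hc, trivial⟩
  | cons S L ih =>
    rw [chainUnion_cons, ← union_assoc] at hT hmin hc
    exact ⟨h.1, h.2.1, h.2.2.1, ih h.2.2.2 hT hmin hc⟩

lemma disjoint_sdiff_sdiff_union (A B Z : Finset (Fin n)) :
    Disjoint (A \ Z) (B \ (Z ∪ A)) :=
  disjoint_left.2 fun _ ha hb => (mem_sdiff.1 hb).2 (mem_union_right _ (mem_sdiff.1 ha).1)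

lemma union_sdiff_eq_union_sdiff (A B Z : Finset (Fin n)) :
    (A ∪ B) \ Z = A \ Z ∪ B \ (Z ∪ A) := by
  ext a
  simp only [mem_union, mem_sdiff]
  tauto

lemma alphaQ_union_sdiff (A B Z : Finset (Fin n)) :
    alphaQ p μ ((A ∪ B) \ Z) Z = alphaQ p μ (A \ Z) Z + alphaQ p μ (B \ (Z ∪ A)) (Z ∪ A) := by
  rw [union_sdiff_eq_union_sdiff, alphaQ_union (disjoint_sdiff_sdiff_union A B Z)
    disjoint_sdiff, union_sdiff_self_eq_union]

lemma lamQ_union_sdiff (A B Z : Finset (Fin n)) :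
    lamQ lam ((A ∪ B) \ Z) = lamQ lam (A \ Z) + lamQ lam (B \ (Z ∪ A)) := by
  rw [union_sdiff_eq_union_sdiff, lamQ_union (disjoint_sdiff_sdiff_union A B Z)]

/-- Along the chain, each group (and finally `S`) has its part inside `Z` at least as dense as
the whole group, so the part outside `Z` is at most as dense (`alphaQ_sdiff_le`). -/
lemma MinChain.alphaQ_sdiff_le (hp : ProbEntries p) (hμ : ∀ j, 0 ≤ μ j)
    (hlam : ∀ r, 0 < lam r) {Θ : ℝ} :
    ∀ {L : List (Finset (Fin n))} {U Z S : Finset (Fin n)}, MinChain p μ lam U L Θ →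
      S ⊆ (U ∪ chainUnion L)ᶜ → alphaQ p μ S (U ∪ chainUnion L) ≤ Θ * lamQ lam S →
      (∀ R ⊆ S.erase i, Θ * lamQ lam R ≤ alphaQ p μ R (U ∪ chainUnion L)) →
      U ⊆ Z → i ∉ Z → i ∉ chainUnion L →
      alphaQ p μ ((chainUnion L ∪ S) \ Z) Z ≤ Θ * lamQ lam ((chainUnion L ∪ S) \ Z)
  | [], U, Z, S, _, hS, hSΘ, hfree, hUZ, hiZ, _ => by
    simp only [chainUnion_nil, union_empty, empty_union] at hS hSΘ hfree ⊢
    refine _root_.alphaQ_sdiff_le hp hμ (disjoint_of_subset_right hS disjoint_compl_right) hUZ hSΘ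
      (hfree _ fun a ha => ?_)
    exact mem_erase.2 ⟨fun h => hiZ (h ▸ (mem_inter.1 ha).2), (mem_inter.1 ha).1⟩
  | T :: L, U, Z, S, ⟨hT, hTmin, hTΘ, hL⟩, hS, hSΘ, hfree, hUZ, hiZ, hiTL => by
    rw [chainUnion_cons, mem_union, not_or] at hiTL
    rw [chainUnion_cons, ← union_assoc] at hS hSΘ hfree
    rw [chainUnion_cons, union_assoc, alphaQ_union_sdiff, lamQ_union_sdiff, mul_add]
    have hUT : Disjoint U T := disjoint_of_subset_right hT disjoint_compl_right
    have hTpart : alphaQ p μ (T \ Z) Z ≤ fQ p μ lam T U * lamQ lam (T \ Z) :=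
      _root_.alphaQ_sdiff_le hp hμ hUT hUZ (alphaQ_eq_fQ_mul hlam T U).le
        (mul_lamQ_le_alphaQ hlam fun hne => hTmin _ inter_subset_left hne)
    have hrest := MinChain.alphaQ_sdiff_le hp hμ hlam hL hS hSΘ hfree
      (union_subset_union hUZ subset_rfl) (by simp [hiZ, hiTL.1]) hiTL.2
    linarith [mul_le_mul_of_nonneg_right hTΘ (lamQ_nonneg hlam (T \ Z))]

end Chains

section Certificates

variable {n m : ℕ} {p : Fin n → Fin m → ℝ} {μ : Fin m → ℝ} {lam : Fin n → ℝ} {i : Fin n}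

/-- Evidence that queue `i` is served at rate at least `1 - Θ`
(`Certificate.one_sub_le_rateQ`). -/
structure Certificate (p : Fin n → Fin m → ℝ) (μ : Fin m → ℝ) (lam : Fin n → ℝ) (i : Fin n)
    (Θ : ℝ) (L : List (Finset (Fin n))) (S : Finset (Fin n)) : Prop where
  mem : i ∈ S
  subset_compl : S ⊆ (chainUnion L)ᶜ
  chain : MinChain p μ lam ∅ L Θ
  fQ_le : fQ p μ lam S (chainUnion L) ≤ Θ
  le_fQ : ∀ R ⊆ S.erase i, R.Nonempty → Θ ≤ fQ p μ lam R (chainUnion L)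

lemma Certificate.notMem_chainUnion {Θ : ℝ} {L : List (Finset (Fin n))} {S : Finset (Fin n)}
    (h : Certificate p μ lam i Θ L S) : i ∉ chainUnion L :=
  mem_compl.1 (h.subset_compl h.mem)

lemma Certificate.one_sub_le_rateQ (hp : ProbEntries p) (hμ : ∀ j, 0 ≤ μ j)
    (hlam : ∀ r, 0 < lam r) {Θ : ℝ} {L : List (Finset (Fin n))} {S : Finset (Fin n)}
    (h : Certificate p μ lam i Θ L S) (hΘ : Θ < 1) : 1 - Θ ≤ rateQ lam μ p i := by
  by_contra! hlt
  rw [rateQ_eq_rateAux] at hlt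
  obtain ⟨Z, hiZ, hZ⟩ := exists_dense_of_rateAux_lt hp hμ hlam hΘ (n + 1) ∅
    card_compl_empty_lt (notMem_empty i) hlt
  have hiX : i ∈ (chainUnion L ∪ S) \ Z := mem_sdiff.2 ⟨mem_union_right _ h.mem, hiZ⟩
  have hdense := (lt_fQ_iff hlam ⟨i, hiX⟩).1
    (hZ _ (fun a ha => mem_compl.2 (mem_sdiff.1 ha).2) ⟨i, hiX⟩)
  have hsparse := h.chain.alphaQ_sdiff_le hp hμ hlam (Z := Z) (S := S)
    (by simpa using h.subset_compl)
    (by simpa using (fQ_le_iff hlam ⟨i, h.mem⟩).1 h.fQ_le)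
    (fun R hR => by simpa using mul_lamQ_le_alphaQ hlam (h.le_fQ R hR))
    (empty_subset Z) hiZ h.notMem_chainUnion
  linarith

lemma MinChain.concat_nextGroup (hp : ProbEntries p) (hμ : ∀ j, 0 ≤ μ j)
    (hlam : ∀ r, 0 < lam r) {L : List (Finset (Fin n))} {c : ℝ} (h : MinChain p μ lam ∅ L c)
    (hne : (chainUnion L)ᶜ.Nonempty)
    (hc : c ≤ fQ p μ lam (nextGroup p μ lam (chainUnion L)) (chainUnion L)) :
    MinChain p μ lam ∅ (L ++ [nextGroup p μ lam (chainUnion L)])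
      (fQ p μ lam (nextGroup p μ lam (chainUnion L)) (chainUnion L)) := by
  refine (h.mono hc).concat (by simpa using nextGroup_subset _) (fun R hR hRne => ?_) (by simp)
  simpa using (nextGroup_isMin hp hμ hlam hne).2 R (hR.trans (nextGroup_subset _)) hRne

lemma rateAux_eq_zero_or_certificate (hp : ProbEntries p) (hμ : ∀ j, 0 ≤ μ j)
    (hlam : ∀ r, 0 < lam r) :
    ∀ (fuel : ℕ) (L : List (Finset (Fin n))) (c : ℝ), (chainUnion L)ᶜ.card < fuel →
      i ∉ chainUnion L → MinChain p μ lam ∅ L c →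
      (∀ R ⊆ (chainUnion L)ᶜ, R.Nonempty → c ≤ fQ p μ lam R (chainUnion L)) →
      rateAux lam p fuel (chainUnion L)ᶜ (discount p μ (chainUnion L)) i = 0 ∨
      ∃ (L' : List (Finset (Fin n))) (S : Finset (Fin n)),
        Certificate p μ lam i (fQ p μ lam S (chainUnion L')) L' S ∧
        fQ p μ lam S (chainUnion L') < 1 ∧
        rateAux lam p fuel (chainUnion L)ᶜ (discount p μ (chainUnion L)) i =
          1 - fQ p μ lam S (chainUnion L')
  | 0, _, _, hcard, _, _, _ => absurd hcard (Nat.not_lt_zero _)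
  | fuel + 1, L, c, hcard, hiL, hL, hc => by
    set U := chainUnion L
    set T := nextGroup p μ lam U
    have hUne : Uᶜ.Nonempty := ⟨i, mem_compl.2 hiL⟩
    obtain ⟨hTne, hmin⟩ := nextGroup_isMin hp hμ hlam hUne
    have hcT : c ≤ fQ p μ lam T U := hc T (nextGroup_subset U) hTne
    rw [rateAux_compl_succ]
    split_ifs with hall hiT
    · exact Or.inl rfl
    · obtain ⟨R, hR, hRne, hR1⟩ : ∃ R ⊆ Uᶜ, R.Nonempty ∧ fQ p μ lam R U < 1 := by
        simpa using hall
      refine Or.inr ⟨L, T, ⟨hiT, nextGroup_subset U, hL.mono hcT, le_rfl, fun R' hR' hR'ne => ?_⟩,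
        (hmin R hR hRne).trans_lt hR1, rfl⟩
      exact hmin R' ((hR'.trans (erase_subset i T)).trans (nextGroup_subset U)) hR'ne
    · have hcard' : (chainUnion (L ++ [T]))ᶜ.card < fuel := by
        rw [chainUnion_concat]
        exact (card_compl_union_lt (nextGroup_subset U) hTne).trans_le (Nat.lt_succ_iff.1 hcard)
      have h := rateAux_eq_zero_or_certificate hp hμ hlam fuel (L ++ [T]) (fQ p μ lam T U)
        hcard' (by simpa [U, hiL] using hiT) (hL.concat_nextGroup hp hμ hlam hUne hcT)
        fun R hR hRne => by
          rw [chainUnion_concat] at hR ⊢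
          exact le_fQ_union_nextGroup hp hμ hlam hUne hR hRne
      simpa using h

lemma rateQ_eq_zero_or_certificate (hp : ProbEntries p) (hμ : ∀ j, 0 ≤ μ j)
    (hlam : ∀ r, 0 < lam r) :
    rateQ lam μ p i = 0 ∨ ∃ (L : List (Finset (Fin n))) (S : Finset (Fin n)),
      Certificate p μ lam i (fQ p μ lam S (chainUnion L)) L S ∧
      fQ p μ lam S (chainUnion L) < 1 ∧ rateQ lam μ p i = 1 - fQ p μ lam S (chainUnion L) := by
  rw [rateQ_eq_rateAux]
  exact rateAux_eq_zero_or_certificate hp hμ hlam (n + 1) [] 0 card_compl_empty_lt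
    (notMem_empty i) trivial fun R _ _ => fQ_nonneg hp hμ hlam R ∅

lemma rateQ_nonneg (hp : ProbEntries p) (hμ : ∀ j, 0 ≤ μ j) (hlam : ∀ r, 0 < lam r) :
    0 ≤ rateQ lam μ p i := by
  rcases rateQ_eq_zero_or_certificate hp hμ hlam (i := i) with h | ⟨L, S, -, hS1, h⟩
  · exact h.ge
  · rw [h]
    linarith

/-- `Rs` is the union of the subsets of `V` of density exactly `Θ`, which is one of them since
such sets are closed under union. -/
lemma exists_tight_lt_fQ (hp : ProbEntries p) (hμ : ∀ j, 0 ≤ μ j) (hlam : ∀ r, 0 < lam r)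
    {V W : Finset (Fin n)} {Θ : ℝ} (hWV : Disjoint W V)
    (hV : ∀ R ⊆ V, Θ * lamQ lam R ≤ alphaQ p μ R W) :
    ∃ Rs ⊆ V, alphaQ p μ Rs W ≤ Θ * lamQ lam Rs ∧
      ∀ R ⊆ V \ Rs, R.Nonempty → Θ < fQ p μ lam R (W ∪ Rs) := by
  classical
  set Rs := V.powerset.sup fun R => if alphaQ p μ R W ≤ Θ * lamQ lam R then R else ∅
  have hRsV : Rs ⊆ V := sup_ite_subset
  have hRs : alphaQ p μ Rs W ≤ Θ * lamQ lam Rs :=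
    sup_ite_mem (P := fun R => alphaQ p μ R W ≤ Θ * lamQ lam R)
      (fun A hA B _ hA' hB' => alphaQ_union_le hp hμ hA' hB' (hV _ (inter_subset_left.trans hA)))
      (empty_subset _) (by simp)
  refine ⟨Rs, hRsV, hRs, fun R hR hRne => ?_⟩
  have hRsR : Disjoint Rs R := disjoint_of_subset_right hR disjoint_sdiff
  rw [lt_fQ_iff hlam hRne]
  by_contra! hle
  have hunion : alphaQ p μ (Rs ∪ R) W ≤ Θ * lamQ lam (Rs ∪ R) := by
    rw [alphaQ_union hRsR (disjoint_of_subset_right hRsV hWV), lamQ_union hRsR]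
    linarith
  obtain ⟨a, ha⟩ := hRne
  exact disjoint_left.1 hRsR (subset_sup_ite (union_subset hRsV (hR.trans sdiff_subset))
    hunion (mem_union_right _ ha)) ha

/-- Moving the union of the `i`-free subsets of `S` of density exactly `Θ` into the chain
makes all remaining `i`-free subsets strictly denser than `Θ`. -/
lemma Certificate.exists_strict (hp : ProbEntries p) (hμ : ∀ j, 0 ≤ μ j)
    (hlam : ∀ r, 0 < lam r) {Θ : ℝ} {L : List (Finset (Fin n))} {S : Finset (Fin n)}
    (h : Certificate p μ lam i Θ L S) :
    ∃ (L' : List (Finset (Fin n))) (S' : Finset (Fin n)), Certificate p μ lam i Θ L' S' ∧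
      ∀ R ⊆ S'.erase i, R.Nonempty → Θ < fQ p μ lam R (chainUnion L') := by
  set W := chainUnion L
  have hΘ : 0 ≤ Θ := (fQ_nonneg hp hμ hlam S W).trans h.fQ_le
  have hWS : Disjoint W S := disjoint_of_subset_right h.subset_compl disjoint_compl_right
  have hfree (R) (hR : R ⊆ S.erase i) : Θ * lamQ lam R ≤ alphaQ p μ R W :=
    mul_lamQ_le_alphaQ hlam (h.le_fQ R hR)
  obtain ⟨Rs, hRsS, hRs, hstrict⟩ :=
    exists_tight_lt_fQ hp hμ hlam (disjoint_of_subset_right (erase_subset i S) hWS) hfree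
  have hiRs : i ∉ Rs := fun hi => notMem_erase i S (hRsS hi)
  have hRsW : Rs ⊆ Wᶜ := (hRsS.trans (erase_subset i S)).trans h.subset_compl
  have hrest : alphaQ p μ (S \ Rs) (W ∪ Rs) ≤ Θ * lamQ lam (S \ Rs) := by
    have hsplit : Rs ∪ S \ Rs = S := union_sdiff_of_subset (hRsS.trans (erase_subset i S))
    have hα := alphaQ_union (p := p) (μ := μ) (disjoint_sdiff (s := Rs) (t := S))
      (disjoint_of_subset_right hRsW disjoint_compl_right)
    have hl := lamQ_union (lam := lam) (disjoint_sdiff (s := Rs) (t := S))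
    rw [hsplit] at hα hl
    have hS := (fQ_le_iff hlam ⟨i, h.mem⟩).1 h.fQ_le
    rw [hα, hl, mul_add] at hS
    linarith [hfree Rs hRsS]
  have hstrict' : ∀ R ⊆ (S \ Rs).erase i, R.Nonempty → Θ < fQ p μ lam R (W ∪ Rs) :=
    fun R hR => hstrict R (erase_sdiff_comm S Rs i ▸ hR)
  refine ⟨L ++ [Rs], S \ Rs, ⟨mem_sdiff.2 ⟨h.mem, hiRs⟩, ?_, ?_, ?_, ?_⟩, ?_⟩
  · rw [chainUnion_concat, compl_union, ← sdiff_eq_inter_compl]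
    exact sdiff_subset_sdiff h.subset_compl subset_rfl
  · refine h.chain.concat (by simpa using hRsW) (fun R hR hRne => ?_) ?_ <;> rw [empty_union]
    · exact (fQ_le_of_alphaQ_le hlam hΘ hRs).trans (h.le_fQ R (hR.trans hRsS) hRne)
    · exact fQ_le_of_alphaQ_le hlam hΘ hRs
  · rw [chainUnion_concat]
    exact fQ_le_of_alphaQ_le hlam hΘ hrest
  · rw [chainUnion_concat]
    exact fun R hR hRne => (hstrict' R hR hRne).le
  · rw [chainUnion_concat]
    exact hstrict'

end Certificates

section Update

variable {n m : ℕ} {p : Fin n → Fin m → ℝ} {μ : Fin m → ℝ} {lam : Fin n → ℝ} {i : Fin n}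

lemma prod_update_of_notMem {x : Fin m → ℝ} {W : Finset (Fin n)} (hiW : i ∉ W) (j : Fin m) :
    ∏ r ∈ W, (1 - Function.update p i x r j) = ∏ r ∈ W, (1 - p r j) :=
  prod_congr rfl fun r hr => by rw [Function.update_of_ne (ne_of_mem_of_not_mem hr hiW)]

lemma prod_update_of_mem {x : Fin m → ℝ} {S : Finset (Fin n)} (hiS : i ∈ S) (j : Fin m) :
    ∏ r ∈ S, (1 - Function.update p i x r j) = (1 - x j) * ∏ r ∈ S.erase i, (1 - p r j) := by
  rw [← mul_prod_erase S _ hiS, Function.update_self,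
    prod_update_of_notMem (notMem_erase i S)]

lemma fQ_update_of_notMem {x : Fin m → ℝ} {S W : Finset (Fin n)} (hiS : i ∉ S) (hiW : i ∉ W) :
    fQ (Function.update p i x) μ lam S W = fQ p μ lam S W := by
  simp only [fQ, alphaQ, prod_update_of_notMem hiS, prod_update_of_notMem hiW]

lemma fQ_update_smul_add {x y : Fin m → ℝ} {a b : ℝ} (hab : a + b = 1)
    {S W : Finset (Fin n)} (hiS : i ∈ S) (hiW : i ∉ W) :
    fQ (Function.update p i (a • x + b • y)) μ lam S W =
      a * fQ (Function.update p i x) μ lam S W + b * fQ (Function.update p i y) μ lam S W := by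
  simp only [fQ, alphaQ, prod_update_of_notMem hiW, prod_update_of_mem hiS, mul_div_assoc',
    ← add_div, mul_sum, ← sum_add_distrib, Pi.add_apply, Pi.smul_apply, smul_eq_mul]
  congr 1
  refine sum_congr rfl fun j _ => ?_
  linear_combination (-(μ j * (∏ r ∈ W, (1 - p r j)) * (1 - ∏ r ∈ S.erase i, (1 - p r j)))) * hab

lemma continuous_fQ_update (S W : Finset (Fin n)) :
    Continuous fun x : Fin m → ℝ => fQ (Function.update p i x) μ lam S W := by
  unfold fQ alphaQ
  fun_prop

lemma minChain_update_iff {x : Fin m → ℝ} {c : ℝ} :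
    ∀ {L : List (Finset (Fin n))} {U : Finset (Fin n)}, i ∉ U → i ∉ chainUnion L →
      (MinChain (Function.update p i x) μ lam U L c ↔ MinChain p μ lam U L c)
  | [], _, _, _ => Iff.rfl
  | T :: L, U, hiU, hiTL => by
    rw [chainUnion_cons, mem_union, not_or] at hiTL
    have hiUT : i ∉ U ∪ T := by simp [hiU, hiTL.1]
    simp only [MinChain, fQ_update_of_notMem hiTL.1 hiU, minChain_update_iff hiUT hiTL.2]
    exact and_congr_right fun _ => and_congr_left fun _ =>
      forall₂_congr fun R hR => by rw [fQ_update_of_notMem (fun hi => hiTL.1 (hR hi)) hiU]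

lemma Certificate.update {x y : Fin m → ℝ} {Θ Θ' : ℝ} {L : List (Finset (Fin n))}
    {S : Finset (Fin n)} (h : Certificate (Function.update p i x) μ lam i Θ L S)
    (hΘ : Θ ≤ Θ') (hy : fQ (Function.update p i y) μ lam S (chainUnion L) ≤ Θ')
    (hfree : ∀ R ⊆ S.erase i, R.Nonempty →
      Θ' ≤ fQ (Function.update p i x) μ lam R (chainUnion L)) :
    Certificate (Function.update p i y) μ lam i Θ' L S := by
  have hiL := h.notMem_chainUnion
  refine ⟨h.mem, h.subset_compl, ?_, hy, fun R hR hRne => ?_⟩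
  · exact (minChain_update_iff (notMem_empty i) hiL).2
      ((minChain_update_iff (notMem_empty i) hiL).1 (h.chain.mono hΘ))
  · have hiR : i ∉ R := fun hi => notMem_erase i S (hR hi)
    simpa only [fQ_update_of_notMem hiR hiL] using hfree R hR hRne

end Update

section Semicontinuity

open Filter Topology

variable {α γ : Type*} [TopologicalSpace α] [LinearOrder γ] [TopologicalSpace γ]
  [OrderTopology γ]

lemma ContinuousWithinAt.lowerSemicontinuousWithinAt_of_le {f g : α → γ} {s : Set α} {x : α}
    (hg : ContinuousWithinAt g s x) (hgx : g x = f x) (hle : ∀ᶠ y in 𝓝[s] x, g y ≤ f y) :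
    LowerSemicontinuousWithinAt f s x := fun c hc =>
  ((hg.lowerSemicontinuousWithinAt c (hgx.symm ▸ hc : c < g x)).and hle).mono fun _ h =>
    h.1.trans_le h.2

end Semicontinuity

lemma LowerSemicontinuousOn.minimizers_nonempty_isClosed_convex {𝕜 E β : Type*} [Semiring 𝕜]
    [PartialOrder 𝕜] [AddCommMonoid E] [SMul 𝕜 E] [TopologicalSpace E] [T2Space E]
    [LinearOrder β] {s : Set E} {f : E → β} (hf : LowerSemicontinuousOn f s)
    (hqc : QuasiconvexOn 𝕜 s f) (hs : IsCompact s) (hne : s.Nonempty) :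
    Set.Nonempty {x | x ∈ s ∧ ∀ y ∈ s, f x ≤ f y} ∧ IsClosed {x | x ∈ s ∧ ∀ y ∈ s, f x ≤ f y} ∧
      Convex 𝕜 {x | x ∈ s ∧ ∀ y ∈ s, f x ≤ f y} := by
  obtain ⟨x₀, hx₀, hmin⟩ := hf.exists_isMinOn hne hs
  have hset : {x | x ∈ s ∧ ∀ y ∈ s, f x ≤ f y} = s ∩ f ⁻¹' Set.Iic (f x₀) :=
    Set.ext fun x => ⟨fun hx => ⟨hx.1, hx.2 x₀ hx₀⟩, fun hx => ⟨hx.1, fun y hy =>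
      (show f x ≤ f x₀ from hx.2).trans (isMinOn_iff.1 hmin y hy)⟩⟩
  rw [hset]
  exact ⟨⟨x₀, hx₀, le_rfl⟩, (hf.isCompact_inter_preimage_Iic hs _).isClosed, hqc (f x₀)⟩

section BestResponse

open Filter Topology

variable {n m : ℕ} {p : Fin n → Fin m → ℝ} {μ : Fin m → ℝ} {lam : Fin n → ℝ}

lemma quasiconvexOn_rateQ_update (hp : ∀ r, inSimplex (p r)) (hμ : ∀ j, 0 ≤ μ j)
    (hlam : ∀ r, 0 < lam r) (i : Fin n) :
    QuasiconvexOn ℝ (stdSimplex ℝ (Fin m)) fun x => rateQ lam μ (Function.update p i x) i := by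
  refine quasiconvexOn_iff_le_max.2 ⟨convex_stdSimplex ℝ _, fun x hx y hy a b ha hb hab => ?_⟩
  have hz := convex_stdSimplex ℝ (Fin m) hx hy ha hb hab
  rcases rateQ_eq_zero_or_certificate (probEntries_update hp hz) hμ hlam (i := i)
    with h0 | ⟨L, S, hc, h1, hval⟩
  · rw [h0]
    exact le_max_of_le_left (rateQ_nonneg (probEntries_update hp hx) hμ hlam)
  -- `f(S | ⋃ L)` is affine in the strategy of `i`, so it is no larger at one of the endpoints
  have hcombo := Convex.min_le_combo (fQ (Function.update p i x) μ lam S (chainUnion L))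
    (fQ (Function.update p i y) μ lam S (chainUnion L)) ha hb hab
  rw [smul_eq_mul, smul_eq_mul, ← fQ_update_smul_add hab hc.mem hc.notMem_chainUnion] at hcombo
  obtain ⟨w, hw, hwS, hwmax⟩ : ∃ w ∈ stdSimplex ℝ (Fin m),
      fQ (Function.update p i w) μ lam S (chainUnion L) ≤
        fQ (Function.update p i (a • x + b • y)) μ lam S (chainUnion L) ∧
      rateQ lam μ (Function.update p i w) i ≤
        max (rateQ lam μ (Function.update p i x) i) (rateQ lam μ (Function.update p i y) i) := by
    rcases min_le_iff.1 hcombo with h | h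
    exacts [⟨x, hx, h, le_max_left _ _⟩, ⟨y, hy, h, le_max_right _ _⟩]
  rw [hval]
  exact ((hc.update le_rfl hwS hc.le_fQ).one_sub_le_rateQ (probEntries_update hp hw) hμ hlam
    h1).trans hwmax

lemma lowerSemicontinuousOn_rateQ_update (hp : ∀ r, inSimplex (p r)) (hμ : ∀ j, 0 ≤ μ j)
    (hlam : ∀ r, 0 < lam r) (i : Fin n) :
    LowerSemicontinuousOn (fun x => rateQ lam μ (Function.update p i x) i)
      (stdSimplex ℝ (Fin m)) := by
  intro x hx
  rcases rateQ_eq_zero_or_certificate (probEntries_update hp hx) hμ hlam (i := i)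
    with h0 | ⟨L, S, hc, h1, hval⟩
  · exact continuousWithinAt_const.lowerSemicontinuousWithinAt_of_le h0.symm
      (eventually_nhdsWithin_of_forall fun y hy => rateQ_nonneg (probEntries_update hp hy) hμ hlam)
  obtain ⟨L', S', hc', hstrict⟩ := hc.exists_strict (probEntries_update hp hx) hμ hlam
  set Θ := fQ (Function.update p i x) μ lam S (chainUnion L)
  set φ := fun y => fQ (Function.update p i y) μ lam S' (chainUnion L')
  have hφ : Continuous φ := continuous_fQ_update _ _
  have hnear : ∀ᶠ y in 𝓝 x, φ y < 1 ∧ ∀ R ∈ (S'.erase i).powerset, R.Nonempty →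
      φ y < fQ (Function.update p i x) μ lam R (chainUnion L') := by
    refine (hφ.continuousAt.eventually_lt continuousAt_const (hc'.fQ_le.trans_lt h1)).and ?_
    refine (eventually_all_finset _).2 fun R hR => ?_
    rcases R.eq_empty_or_nonempty with rfl | hRne
    · simp
    · filter_upwards [hφ.continuousAt.eventually_lt continuousAt_const
        (hc'.fQ_le.trans_lt (hstrict R (mem_powerset.1 hR) hRne))] with y hy using fun _ => hy
  refine ((continuous_const.sub (hφ.max continuous_const)).continuousWithinAt
    ).lowerSemicontinuousWithinAt_of_le (g := fun y => 1 - max (φ y) Θ) ?_ ?_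
  · rw [hval, max_eq_right hc'.fQ_le]
  filter_upwards [nhdsWithin_le_nhds hnear, self_mem_nhdsWithin] with y ⟨hy1, hyR⟩ hy
  exact (hc'.update (le_max_right _ _) (le_max_left _ _) fun R hR hRne =>
    max_le (hyR R (mem_powerset.2 hR) hRne).le (hc'.le_fQ R hR hRne)).one_sub_le_rateQ
    (probEntries_update hp hy) hμ hlam (max_lt hy1 h1)

end BestResponse

theorem statement12_general {n m : ℕ} (hm : 1 ≤ m)
    (lam : Fin n → ℝ) (μ : Fin m → ℝ) (p : Fin n → Fin m → ℝ)
    (hlam : ∀ i, 0 < lam i ∧ lam i < 1) (hmu : ∀ j, 0 ≤ μ j ∧ μ j ≤ 1)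
    (hp : ∀ i, inSimplex (p i)) (i : Fin n) :
    Set.Nonempty {x : Fin m → ℝ | inSimplex x ∧ ∀ y : Fin m → ℝ, inSimplex y →
        rateQ lam μ (Function.update p i x) i ≤ rateQ lam μ (Function.update p i y) i} ∧
    IsClosed {x : Fin m → ℝ | inSimplex x ∧ ∀ y : Fin m → ℝ, inSimplex y →
        rateQ lam μ (Function.update p i x) i ≤ rateQ lam μ (Function.update p i y) i} ∧
    Convex ℝ {x : Fin m → ℝ | inSimplex x ∧ ∀ y : Fin m → ℝ, inSimplex y →
        rateQ lam μ (Function.update p i x) i ≤ rateQ lam μ (Function.update p i y) i} := by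
  have hlam' : ∀ r, 0 < lam r := fun r => (hlam r).1
  have hμ : ∀ j, 0 ≤ μ j := fun j => (hmu j).1
  exact (lowerSemicontinuousOn_rateQ_update hp hμ hlam' i).minimizers_nonempty_isClosed_convex
    (quasiconvexOn_rateQ_update hp hμ hlam' i) (isCompact_stdSimplex ℝ (Fin m))
    ⟨_, single_mem_stdSimplex ℝ (⟨0, hm⟩ : Fin m)⟩

/-- **Best responses form a nonempty closed convex set (Corollary 3.6).** For a fixed queue
`i` and fixed strategies of the other queues, the set of global minimizers of
`x ↦ r_i(x, p_{-i})` over the simplex is nonempty, closed and convex. -/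
theorem statement12 {n m : ℕ} (hn : 1 ≤ n) (hm : 1 ≤ m)
    (lam : Fin n → ℝ) (μ : Fin m → ℝ) (p : Fin n → Fin m → ℝ)
    (hlam : ∀ i, 0 < lam i ∧ lam i < 1) (hmu : ∀ j, 0 ≤ μ j ∧ μ j ≤ 1)
    (hp : ∀ i, inSimplex (p i)) (i : Fin n) :
    Set.Nonempty {x : Fin m → ℝ | inSimplex x ∧ ∀ y : Fin m → ℝ, inSimplex y →
        rateQ lam μ (Function.update p i x) i ≤ rateQ lam μ (Function.update p i y) i} ∧
    IsClosed {x : Fin m → ℝ | inSimplex x ∧ ∀ y : Fin m → ℝ, inSimplex y →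
        rateQ lam μ (Function.update p i x) i ≤ rateQ lam μ (Function.update p i y) i} ∧
    Convex ℝ {x : Fin m → ℝ | inSimplex x ∧ ∀ y : Fin m → ℝ, inSimplex y →
        rateQ lam μ (Function.update p i x) i ≤ rateQ lam μ (Function.update p i y) i} :=
  statement12_general hm lam μ p hlam hmu hp i
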